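/- Let V be a finite set, F a finite index set, and for each t ∈ F let g_t : Finset V → ℝ be supermodular, non-increasing, and non-negative. Then the set function A ↦ ∏_{t ∈ F} g_t(A) is supermodular, non-increasing, and non-negative. -/

import Mathlib

/-- A set function `f : Finset V → ℝ` is supermodular: for all `A ⊆ B` and `v ∉ B`,
`f(A ∪ {v}) − f(A) ≤ f(B ∪ {v}) − f(B)`. -/
def Supermodular {V : Type*} [DecidableEq V] (f : Finset V → ℝ) : Prop :=
  ∀ A B : Finset V, A ⊆ B → ∀ v ∉ B, f (insert v A) - f A ≤ f (insert v B) - f B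

/-- A set function is non-increasing. -/
def NonIncreasing {V : Type*} (f : Finset V → ℝ) : Prop :=
  ∀ A B : Finset V, A ⊆ B → f B ≤ f A

/-- A set function is non-negative. -/
def NonNeg {V : Type*} (f : Finset V → ℝ) : Prop :=
  ∀ A : Finset V, 0 ≤ f A

/-!
The marginal gain of a product splits as
`Δ_v(f g)(A) = f(A ∪ {v}) · Δ_v g(A) + Δ_v f(A) · g(A)`.
For non-negative, non-increasing, supermodular `f`, `g` both gains are non-positive and
non-decreasing in `A`, while the factors multiplying them are non-negative and non-increasing in
`A`, so each summand is non-decreasing in `A`. Supermodularity, monotonicity and non-negativity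
are thus preserved by binary products, and the finite product follows by induction.
-/

section

variable {V : Type*}

theorem NonNeg.mul {f g : Finset V → ℝ} (hf : NonNeg f) (hg : NonNeg g) : NonNeg (f * g) :=
  fun A => mul_nonneg (hf A) (hg A)

theorem NonIncreasing.mul {f g : Finset V → ℝ} (hfm : NonIncreasing f) (hfn : NonNeg f)
    (hgm : NonIncreasing g) (hgn : NonNeg g) : NonIncreasing (f * g) :=
  fun A B hAB => mul_le_mul (hfm A B hAB) (hgm A B hAB) (hgn B) (hfn A)

variable [DecidableEq V]

theorem supermodular_one : Supermodular (1 : Finset V → ℝ) := by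
  intro A B _ v _
  simp

theorem Supermodular.mul {f g : Finset V → ℝ}
    (hfs : Supermodular f) (hfm : NonIncreasing f) (hfn : NonNeg f)
    (hgs : Supermodular g) (hgm : NonIncreasing g) (hgn : NonNeg g) :
    Supermodular (f * g) := by
  intro A B hAB v hv
  have hvAB : insert v A ⊆ insert v B := Finset.insert_subset_insert v hAB
  have hgB : g (insert v B) - g B ≤ 0 := sub_nonpos.mpr (hgm _ _ (Finset.subset_insert v B))
  have hfB : f (insert v B) - f B ≤ 0 := sub_nonpos.mpr (hfm _ _ (Finset.subset_insert v B))
  have hg_term : f (insert v A) * (g (insert v A) - g A)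
      ≤ f (insert v B) * (g (insert v B) - g B) :=
    calc f (insert v A) * (g (insert v A) - g A)
        ≤ f (insert v A) * (g (insert v B) - g B) :=
          mul_le_mul_of_nonneg_left (hgs A B hAB v hv) (hfn _)
      _ ≤ f (insert v B) * (g (insert v B) - g B) := mul_le_mul_of_nonpos_right (hfm _ _ hvAB) hgB
  have hf_term : (f (insert v A) - f A) * g A ≤ (f (insert v B) - f B) * g B :=
    calc (f (insert v A) - f A) * g A
        ≤ (f (insert v B) - f B) * g A := mul_le_mul_of_nonneg_right (hfs A B hAB v hv) (hgn _)
      _ ≤ (f (insert v B) - f B) * g B := mul_le_mul_of_nonpos_left (hgm A B hAB) hfB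
  simp only [Pi.mul_apply]
  linarith

end

theorem finite_product_of_supermodular_nonincreasing_nonneg_general
    {V : Type*} [DecidableEq V]
    {F : Type*} [Fintype F] (g : F → Finset V → ℝ)
    (hs : ∀ t : F, Supermodular (g t))
    (hm : ∀ t : F, NonIncreasing (g t))
    (hn : ∀ t : F, NonNeg (g t)) :
    Supermodular (fun A => ∏ t : F, g t A) ∧
      NonIncreasing (fun A => ∏ t : F, g t A) ∧
      NonNeg (fun A => ∏ t : F, g t A) := by
  have hprod : (fun A => ∏ t : F, g t A) = ∏ t : F, g t :=
    funext fun A => (Finset.prod_apply A _ g).symm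
  rw [hprod]
  exact Finset.prod_induction g (fun f => Supermodular f ∧ NonIncreasing f ∧ NonNeg f)
    (fun f h ⟨hfs, hfm, hfn⟩ ⟨hhs, hhm, hhn⟩ =>
      ⟨hfs.mul hfm hfn hhs hhm hhn, hfm.mul hfn hhm hhn, hfn.mul hhn⟩)
    ⟨supermodular_one, fun _ _ _ => le_rfl, fun _ => zero_le_one⟩
    (fun t _ => ⟨hs t, hm t, hn t⟩)

theorem finite_product_of_supermodular_nonincreasing_nonneg
    {V : Type*} [Fintype V] [DecidableEq V]
    {F : Type*} [Fintype F] (g : F → Finset V → ℝ)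
    (hs : ∀ t : F, Supermodular (g t))
    (hm : ∀ t : F, NonIncreasing (g t))
    (hn : ∀ t : F, NonNeg (g t)) :
    Supermodular (fun A => ∏ t : F, g t A) ∧
      NonIncreasing (fun A => ∏ t : F, g t A) ∧
      NonNeg (fun A => ∏ t : F, g t A) :=
  finite_product_of_supermodular_nonincreasing_nonneg_general g hs hm hn
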